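/- Fix a nonzero linear form l ∈ H₁. (a) For all f, g ∈ P such that l² divides f and l² divides g: g ∈ F_f if and only if every a ∈ ℝ³ with (f/l²)(a) = 0 satisfies (g/l²)(a) = 0. (b) For every linear subspace U ⊆ ℝ³ there exists f ∈ P divisible by l² with {a ∈ ℝ³ : (f/l²)(a) = 0} = U. Consequently, the assignment F_f ↦ {a ∈ ℝ³ : (f/l²)(a) = 0} is a bijection from the set of faces {F_f : f ∈ P, l² ∣ f} onto the set of linear subspaces of ℝ³. -/

import Mathlib

open MvPolynomial

noncomputable section

/-- The space of ternary (3-variable) real polynomials. `H d` corresponds to the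
homogeneous polynomials of degree `d` via the predicate `IsHomogeneous`. -/
abbrev MvP : Type := MvPolynomial (Fin 3) ℝ

/-- The cone `P` of nonnegative ternary quartics. -/
def Pcone : Set MvP :=
  {f | f.IsHomogeneous 4 ∧ ∀ a : Fin 3 → ℝ, 0 ≤ eval a f}

/-- `F` is a face of the cone `P`. -/
def IsFace (F : Set MvP) : Prop :=
  F ⊆ Pcone ∧
  (∀ a ∈ F, ∀ b ∈ F, a + b ∈ F) ∧
  (∀ c : ℝ, 0 ≤ c → ∀ a ∈ F, c • a ∈ F) ∧
  (∀ a ∈ Pcone, ∀ b ∈ Pcone, a + b ∈ F → a ∈ F ∧ b ∈ F)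

/-- `J_F = {q ∈ H₂ : q² ∈ F}`. -/
def Jset (F : Set MvP) : Set MvP :=
  {q | q.IsHomogeneous 2 ∧ q ^ 2 ∈ F}

/-- `F_f = {g ∈ P : f - ε g ∈ P for some ε > 0}`, the smallest face of `P`
containing `f` as an inner point. -/
def Fface (f : MvP) : Set MvP :=
  {g ∈ Pcone | ∃ ε : ℝ, 0 < ε ∧ f - ε • g ∈ Pcone}

/-! Where `l` does not vanish (a dense set), `f = l² q ∈ P` forces `q ≥ 0`, and `q` is a
quadratic form, so `q` is positive semidefinite and its zero set is its radical. Since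
`f - ε g = l² (q_f - ε q_g)`, membership `g ∈ F_f` means `ε q_g ≤ q_f` for some `ε > 0`. Both
forms are invariant under translation by the radical of `q_f` once it lies in the zero set
of `q_g`, and on a complement `q_f` is positive definite, so compactness of the unit sphere
there provides `ε`. Conversely the kernel `U` of any linear map `T` is realised by
`q = ∑ᵢ (T x)ᵢ²`; the bijection follows because `F_f = F_f'` exactly when the zero sets agree. -/

namespace MvPolynomial

variable {σ R : Type*}

section CommSemiring

variable [CommSemiring R]

theorem IsHomogeneous.exists_linearMap_eval {p : MvPolynomial σ R} (hp : p.IsHomogeneous 1) :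
    ∃ L : (σ → R) →ₗ[R] R, ∀ x, L x = eval x p := by
  have hmem : p ∈ Submodule.span R (Set.range X) := by
    rw [← homogeneousSubmodule_one_eq_span_X]; exact hp
  clear hp
  induction hmem using Submodule.span_induction with
  | mem _ h =>
    obtain ⟨i, rfl⟩ := h
    exact ⟨LinearMap.proj i, fun x => by simp⟩
  | zero => exact ⟨0, fun x => by simp⟩
  | add p q _ _ ihp ihq =>
    obtain ⟨L, hL⟩ := ihp
    obtain ⟨M, hM⟩ := ihq
    exact ⟨L + M, fun x => by simp [hL, hM]⟩
  | smul r p _ ih =>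
    obtain ⟨L, hL⟩ := ih
    exact ⟨r • L, fun x => by simp [hL]⟩

theorem IsHomogeneous.exists_quadraticMap_eval {p : MvPolynomial σ R} (hp : p.IsHomogeneous 2) :
    ∃ Q : QuadraticMap R (σ → R) R, ∀ x, Q x = eval x p := by
  have hmem : p ∈ homogeneousSubmodule σ R 1 * homogeneousSubmodule σ R 1 := by
    rw [← sq, homogeneousSubmodule_one_pow]; exact hp
  refine Submodule.mul_induction_on hmem (fun a ha b hb => ?_) fun a b ⟨Qa, ha⟩ ⟨Qb, hb⟩ =>
    ⟨Qa + Qb, fun x => by simp [ha, hb]⟩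
  obtain ⟨La, hLa⟩ := IsHomogeneous.exists_linearMap_eval ha
  obtain ⟨Lb, hLb⟩ := IsHomogeneous.exists_linearMap_eval hb
  exact ⟨QuadraticMap.linMulLin La Lb, fun x => by simp [hLa, hLb]⟩

attribute [local instance] gradedAlgebra in
theorem homogeneousComponent_mul_add {p : MvPolynomial σ R} {m : ℕ} (hp : p.IsHomogeneous m)
    (q : MvPolynomial σ R) (k : ℕ) :
    homogeneousComponent (m + k) (p * q) = p * homogeneousComponent k q := by
  rw [← decomposition.decompose'_apply, ← decomposition.decompose'_apply]
  exact DirectSum.coe_decompose_mul_add_of_left_mem _ ((mem_homogeneousSubmodule m p).mpr hp)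

theorem exists_isHomogeneous_one_eval_eq [Fintype σ] (L : (σ → R) →ₗ[R] R) :
    ∃ p : MvPolynomial σ R, p.IsHomogeneous 1 ∧ ∀ x, eval x p = L x := by
  classical
  exact ⟨∑ i, C (L fun j => if i = j then 1 else 0) * X i,
    IsHomogeneous.sum _ _ _ fun i _ => isHomogeneous_C_mul_X _ i,
    fun x => by simp [LinearMap.pi_apply_eq_sum_univ L x, mul_comm]⟩

theorem exists_isHomogeneous_two_eval_eq_sum_sq [Fintype σ] {ι : Type*} [Fintype ι]
    (T : (σ → R) →ₗ[R] ι → R) :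
    ∃ q : MvPolynomial σ R, q.IsHomogeneous 2 ∧ ∀ x, eval x q = ∑ i, T x i ^ 2 := by
  choose p hp hpT using fun i => exists_isHomogeneous_one_eval_eq ((LinearMap.proj i).comp T)
  exact ⟨∑ i, p i ^ 2, IsHomogeneous.sum _ _ _ fun i _ => by simpa using (hp i).pow 2,
    fun x => by simp [hpT]⟩

end CommSemiring

theorem IsHomogeneous.of_mul_left [CommRing R] [IsDomain R] {p q : MvPolynomial σ R} {m n : ℕ}
    (hp : p.IsHomogeneous m) (hp0 : p ≠ 0) (hpq : (p * q).IsHomogeneous (m + n)) :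
    q.IsHomogeneous n := by
  intro d hd
  rw [Pi.one_def, ← Finsupp.degree_eq_weight_one]
  by_contra hdn
  have hcomp : homogeneousComponent d.degree q = 0 := by
    have h := homogeneousComponent_mul_add hp q d.degree
    rw [homogeneousComponent_of_mem hpq, if_neg (by omega)] at h
    exact (mul_eq_zero.mp h.symm).resolve_left hp0
  apply hd
  simpa [coeff_homogeneousComponent] using congrArg (coeff d) hcomp

theorem dense_eval_ne_zero_of_isHomogeneous_one {l : MvPolynomial σ ℝ} (hl : l.IsHomogeneous 1)
    (hl0 : l ≠ 0) : Dense {x : σ → ℝ | eval x l ≠ 0} := by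
  obtain ⟨L, hL⟩ := hl.exists_linearMap_eval
  have hker : {x : σ → ℝ | eval x l ≠ 0} = (LinearMap.ker L : Set (σ → ℝ))ᶜ := by
    ext x; simp [hL]
  rw [hker, ← interior_eq_empty_iff_dense_compl, Set.eq_empty_iff_forall_notMem]
  intro x hx
  refine hl0 (MvPolynomial.funext fun y => ?_)
  rw [← hL, map_zero, ← LinearMap.mem_ker, (LinearMap.ker L).eq_top_of_nonempty_interior' ⟨x, hx⟩]
  exact Submodule.mem_top

theorem eval_nonneg_of_sq_mul {l q : MvPolynomial σ ℝ} (hl : l.IsHomogeneous 1) (hl0 : l ≠ 0)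
    (h : ∀ x, 0 ≤ eval x (l ^ 2 * q)) (x : σ → ℝ) : 0 ≤ eval x q := by
  have hclosed : IsClosed {x : σ → ℝ | 0 ≤ eval x q} :=
    isClosed_le continuous_const (continuous_eval q)
  have hsub : {x : σ → ℝ | eval x l ≠ 0} ⊆ {x | 0 ≤ eval x q} := fun y hy => by
    have hly : eval y l ≠ 0 := hy
    have := h y
    rw [map_mul, map_pow] at this
    exact (mul_nonneg_iff_of_pos_left (by positivity)).mp this
  exact hclosed.closure_subset_iff.mpr hsub (dense_eval_ne_zero_of_isHomogeneous_one hl hl0 x)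

end MvPolynomial

open Metric

namespace QuadraticMap

section OrderedField

variable {K M : Type*} [Field K] [LinearOrder K] [IsStrictOrderedRing K] [AddCommGroup M]
  [Module K M] {Q : QuadraticMap K M K}

theorem mem_radical_iff_of_nonneg (hQ : ∀ x, 0 ≤ Q x) {m : M} : m ∈ Q.radical ↔ Q m = 0 := by
  refine ⟨fun h => (mem_radical_iff'.mp h).1, fun hm => mem_radical_iff'.mpr ⟨hm, fun n => ?_⟩⟩
  -- `t ↦ Q (m + t • n)` is a nonnegative polynomial of degree at most 2 with no constant term
  have hpolar : polar Q m n = 0 := by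
    have hdiscr := discrim_le_zero (a := Q n) (b := polar Q m n) (c := 0) fun t => by
      have hpol : polar Q m (t • n) = Q (m + t • n) - Q m - Q (t • n) := rfl
      rw [polar_smul_right, Q.map_smul, hm, smul_eq_mul, smul_eq_mul] at hpol
      nlinarith [hQ (m + t • n)]
    rw [discrim, mul_zero, sub_zero] at hdiscr
    exact pow_eq_zero_iff two_ne_zero |>.mp (le_antisymm hdiscr (sq_nonneg _))
  have hpol : polar Q m n = Q (m + n) - Q m - Q n := rfl
  linarith

end OrderedField

variable {E : Type*} [NormedAddCommGroup E] [NormedSpace ℝ E] [FiniteDimensional ℝ E]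

theorem continuous_of_finiteDimensional (Q : QuadraticMap ℝ E ℝ) : Continuous Q := by
  have hQ : ⇑Q = fun x => (associated Q).toContinuousBilinearMap x x :=
    funext fun x => (associated_eq_self_apply ℝ Q x).symm
  rw [hQ]
  fun_prop

theorem PosDef.exists_smul_le {Q : QuadraticMap ℝ E ℝ} (hQ : Q.PosDef) (G : QuadraticMap ℝ E ℝ) :
    ∃ ε > 0, ∀ x, ε * G x ≤ Q x := by
  have hQ0 : ∀ x ∈ sphere (0 : E) 1, Q x ≠ 0 := fun x hx =>
    (hQ x (ne_zero_of_mem_unit_sphere ⟨x, hx⟩)).ne'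
  obtain ⟨C, hC⟩ := (isCompact_sphere (0 : E) 1).exists_bound_of_continuousOn
    (G.continuous_of_finiteDimensional.continuousOn.div
      Q.continuous_of_finiteDimensional.continuousOn hQ0)
  refine ⟨(max C 1)⁻¹, by positivity, fun x => ?_⟩
  rcases eq_or_ne x 0 with rfl | hx
  · simp
  set u := ‖x‖⁻¹ • x
  have hu : u ∈ sphere (0 : E) 1 := by simp [u, norm_smul, hx]
  have hxu : x = ‖x‖ • u := by simp [u, smul_smul, hx]
  have hQu : 0 < Q u := hQ u (ne_zero_of_mem_unit_sphere ⟨u, hu⟩)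
  have hGu : G u ≤ max C 1 * Q u := by
    have h := (Real.le_norm_self _).trans (hC u hu)
    rw [Pi.div_apply, div_le_iff₀ hQu] at h
    nlinarith [le_max_left C 1]
  rw [hxu, Q.map_smul, G.map_smul, smul_eq_mul, smul_eq_mul, inv_mul_le_iff₀ (by positivity)]
  linarith [mul_le_mul_of_nonneg_left hGu (mul_self_nonneg ‖x‖)]

theorem exists_smul_le_of_nonneg {Q G : QuadraticMap ℝ E ℝ} (hQ : ∀ x, 0 ≤ Q x)
    (hG : ∀ x, 0 ≤ G x) (hQG : ∀ x, Q x = 0 → G x = 0) : ∃ ε > 0, ∀ x, ε * G x ≤ Q x := by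
  obtain ⟨W, hW⟩ := Submodule.exists_isCompl Q.radical
  have hposW : (Q.comp W.subtype).PosDef := fun w hw => by
    refine (hQ w).lt_of_ne fun h => hw ?_
    have hmem : (w : E) ∈ Q.radical ⊓ W := ⟨(mem_radical_iff_of_nonneg hQ).mpr h.symm, w.2⟩
    rw [hW.inf_eq_bot, Submodule.mem_bot] at hmem
    exact Subtype.ext hmem
  obtain ⟨ε, hε, hle⟩ := hposW.exists_smul_le (G.comp W.subtype)
  refine ⟨ε, hε, fun x => ?_⟩
  have hx : x ∈ Q.radical ⊔ W := hW.sup_eq_top ▸ Submodule.mem_top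
  obtain ⟨z, hz, w, hw, rfl⟩ := Submodule.mem_sup.mp hx
  have hzG : z ∈ G.radical :=
    (mem_radical_iff_of_nonneg hG).mpr (hQG z ((mem_radical_iff_of_nonneg hQ).mp hz))
  rw [(mem_radical_iff'.mp hz).2, (mem_radical_iff'.mp hzG).2]
  exact hle ⟨w, hw⟩

end QuadraticMap

theorem zero_mem_Pcone : (0 : MvP) ∈ Pcone :=
  ⟨isHomogeneous_zero _ _ _, fun a => by simp⟩

theorem add_mem_Pcone {f g : MvP} (hf : f ∈ Pcone) (hg : g ∈ Pcone) : f + g ∈ Pcone :=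
  ⟨hf.1.add hg.1, fun x => by rw [map_add]; exact add_nonneg (hf.2 x) (hg.2 x)⟩

theorem smul_mem_Pcone {c : ℝ} (hc : 0 ≤ c) {f : MvP} (hf : f ∈ Pcone) : c • f ∈ Pcone :=
  ⟨by rw [smul_eq_C_mul]; exact hf.1.C_mul c,
    fun x => by rw [smul_eval]; exact mul_nonneg hc (hf.2 x)⟩

theorem self_mem_Fface {f : MvP} (hf : f ∈ Pcone) : f ∈ Fface f :=
  ⟨hf, 1, one_pos, by rw [one_smul, sub_self]; exact zero_mem_Pcone⟩

theorem Fface_subset_Fface_iff {f f' : MvP} (hf : f ∈ Pcone) :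
    Fface f ⊆ Fface f' ↔ f ∈ Fface f' := by
  refine ⟨fun h => h (self_mem_Fface hf), fun ⟨_, δ, hδ, hf'δ⟩ g ⟨hg, ε, hε, hfε⟩ => ?_⟩
  refine ⟨hg, δ * ε, mul_pos hδ hε, ?_⟩
  have heq : f' - (δ * ε) • g = (f' - δ • f) + δ • (f - ε • g) := by
    rw [smul_sub, smul_smul]; abel
  rw [heq]
  exact add_mem_Pcone hf'δ (smul_mem_Pcone hδ.le hfε)

theorem exists_quadraticMap_of_sq_mul_mem_Pcone {l q : MvP} (hl : l.IsHomogeneous 1)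
    (hl0 : l ≠ 0) (hf : l ^ 2 * q ∈ Pcone) :
    ∃ Q : QuadraticMap ℝ (Fin 3 → ℝ) ℝ, (∀ x, Q x = eval x q) ∧ ∀ x, 0 ≤ Q x := by
  have hq : q.IsHomogeneous 2 := (hl.pow 2).of_mul_left (pow_ne_zero 2 hl0) hf.1
  obtain ⟨Q, hQ⟩ := hq.exists_quadraticMap_eval
  exact ⟨Q, hQ, fun x => hQ x ▸ eval_nonneg_of_sq_mul hl hl0 hf.2 x⟩

theorem mem_Fface_iff {l f g qf qg : MvP} (hl : l.IsHomogeneous 1) (hl0 : l ≠ 0)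
    (hf : f ∈ Pcone) (hg : g ∈ Pcone) (hfq : f = l ^ 2 * qf) (hgq : g = l ^ 2 * qg) :
    g ∈ Fface f ↔ ∀ a, eval a qf = 0 → eval a qg = 0 := by
  have hfg : ∀ ε : ℝ, f - ε • g = l ^ 2 * (qf - ε • qg) := fun ε => by
    rw [hfq, hgq, smul_eq_C_mul, smul_eq_C_mul]; ring
  obtain ⟨Qf, hQf, hQf0⟩ := exists_quadraticMap_of_sq_mul_mem_Pcone hl hl0 (hfq ▸ hf)
  obtain ⟨Qg, hQg, hQg0⟩ := exists_quadraticMap_of_sq_mul_mem_Pcone hl hl0 (hgq ▸ hg)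
  constructor
  · rintro ⟨-, ε, hε, hP⟩ a ha
    have h := eval_nonneg_of_sq_mul hl hl0 (hfg ε ▸ hP.2) a
    rw [map_sub, smul_eval, ha] at h
    nlinarith [hQg a, hQg0 a]
  · intro hZ
    obtain ⟨ε, hε, hle⟩ := QuadraticMap.exists_smul_le_of_nonneg hQf0 hQg0 fun x hx => by
      rw [hQg]; exact hZ x (hQf x ▸ hx)
    refine ⟨hg, ε, hε, hf.1.sub (by rw [smul_eq_C_mul]; exact hg.1.C_mul ε), fun x => ?_⟩
    rw [hfg, map_mul, map_pow, map_sub, smul_eval, ← hQf, ← hQg]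
    exact mul_nonneg (sq_nonneg _) (by linarith [hle x])

theorem Fface_eq_Fface_iff {l f f' q q' : MvP} (hl : l.IsHomogeneous 1) (hl0 : l ≠ 0)
    (hf : f ∈ Pcone) (hf' : f' ∈ Pcone) (hfq : f = l ^ 2 * q) (hf'q : f' = l ^ 2 * q') :
    Fface f = Fface f' ↔ {a | eval a q = 0} = {a | eval a q' = 0} := by
  rw [Set.Subset.antisymm_iff, Set.Subset.antisymm_iff, Fface_subset_Fface_iff hf,
    Fface_subset_Fface_iff hf', mem_Fface_iff hl hl0 hf' hf hf'q hfq,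
    mem_Fface_iff hl hl0 hf hf' hfq hf'q, and_comm]
  rfl

theorem exists_submodule_coe_eq_zeroSet {l q : MvP} (hl : l.IsHomogeneous 1) (hl0 : l ≠ 0)
    (hf : l ^ 2 * q ∈ Pcone) :
    ∃ U : Submodule ℝ (Fin 3 → ℝ), (U : Set (Fin 3 → ℝ)) = {a | eval a q = 0} := by
  obtain ⟨Q, hQ, hQ0⟩ := exists_quadraticMap_of_sq_mul_mem_Pcone hl hl0 hf
  exact ⟨Q.radical, by ext a; simp [QuadraticMap.mem_radical_iff_of_nonneg hQ0, hQ]⟩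

theorem exists_sq_mul_mem_Pcone_zeroSet_eq {l : MvP} (hl : l.IsHomogeneous 1)
    (U : Submodule ℝ (Fin 3 → ℝ)) :
    ∃ q : MvP, l ^ 2 * q ∈ Pcone ∧ {a | eval a q = 0} = (U : Set (Fin 3 → ℝ)) := by
  let T := (Module.finBasis ℝ ((Fin 3 → ℝ) ⧸ U)).equivFun.toLinearMap ∘ₗ U.mkQ
  have hT : LinearMap.ker T = U := by
    rw [LinearEquiv.ker_comp, Submodule.ker_mkQ]
  obtain ⟨q, hq, hqT⟩ := exists_isHomogeneous_two_eval_eq_sum_sq T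
  refine ⟨q, ⟨by simpa using (hl.pow 2).mul hq, fun x => ?_⟩, ?_⟩
  · rw [map_mul, map_pow, hqT]; positivity
  · ext a
    simp [hqT, Finset.sum_eq_zero_iff_of_nonneg fun i _ => sq_nonneg (T a i), ← hT,
      _root_.funext_iff]

theorem stmt_10 (l : MvP) (hl : l.IsHomogeneous 1) (hl0 : l ≠ 0) :
    (∀ f g qf qg : MvP, f ∈ Pcone → g ∈ Pcone → f = l ^ 2 * qf → g = l ^ 2 * qg →
      (g ∈ Fface f ↔ ∀ a : Fin 3 → ℝ, eval a qf = 0 → eval a qg = 0)) ∧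
    (∀ U : Submodule ℝ (Fin 3 → ℝ), ∃ f qf : MvP, f ∈ Pcone ∧ f = l ^ 2 * qf ∧
      {a : Fin 3 → ℝ | eval a qf = 0} = (U : Set (Fin 3 → ℝ))) ∧
    ∃ Φ : {F : Set MvP // ∃ f qf : MvP, f ∈ Pcone ∧ f = l ^ 2 * qf ∧ F = Fface f} ≃
        Submodule ℝ (Fin 3 → ℝ),
      ∀ (f qf : MvP), f ∈ Pcone → f = l ^ 2 * qf →
        ∀ h : ∃ f' qf' : MvP, f' ∈ Pcone ∧ f' = l ^ 2 * qf' ∧ Fface f = Fface f',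
          (Φ ⟨Fface f, h⟩ : Set (Fin 3 → ℝ)) = {a : Fin 3 → ℝ | eval a qf = 0} := by
  choose qU hqU hZU using exists_sq_mul_mem_Pcone_zeroSet_eq hl
  refine ⟨fun f g qf qg => mem_Fface_iff hl hl0,
    fun U => ⟨_, qU U, hqU U, rfl, hZU U⟩, ?_⟩
  let Ψ (U : Submodule ℝ (Fin 3 → ℝ)) :
      {F : Set MvP // ∃ f qf : MvP, f ∈ Pcone ∧ f = l ^ 2 * qf ∧ F = Fface f} :=
    ⟨Fface (l ^ 2 * qU U), _, qU U, hqU U, rfl, rfl⟩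
  have hΨ : ∀ U f qf, f ∈ Pcone → f = l ^ 2 * qf →
      (Fface (l ^ 2 * qU U) = Fface f ↔ (U : Set (Fin 3 → ℝ)) = {a | eval a qf = 0}) :=
    fun U f qf hf hfq => by rw [Fface_eq_Fface_iff hl hl0 (hqU U) hf rfl hfq, hZU]
  have hΨbij : Function.Bijective Ψ := by
    refine ⟨fun U U' h => SetLike.coe_injective ?_, ?_⟩
    · exact (hΨ U _ _ (hqU U') rfl).mp (congrArg Subtype.val h) |>.trans (hZU U')
    · rintro ⟨_, f, qf, hf, hfq, rfl⟩
      obtain ⟨U, hU⟩ := exists_submodule_coe_eq_zeroSet hl hl0 (hfq ▸ hf)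
      exact ⟨U, Subtype.ext ((hΨ U f qf hf hfq).mpr hU)⟩
  refine ⟨(Equiv.ofBijective Ψ hΨbij).symm, fun f qf hf hfq h => (hΨ _ f qf hf hfq).mp ?_⟩
  exact congrArg Subtype.val ((Equiv.ofBijective Ψ hΨbij).apply_symm_apply ⟨Fface f, h⟩)
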